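/- arXiv:2008.09822 — 3 statements merged into one kernel-verified Lean document; each statement's English description precedes it below -/
import Mathlib

section
/- Let G be a finite simple graph that is not complete, let S be a minimal separator of G with |S| ≥ 2·tw(G) + 1, and let S' be a set of vertices of G with |S'| ≤ tw(G) + 1 such that G[S ∖ S'] has more than one connected component and every connected component C' of G ∖ S' satisfies |V(C') ∩ S| ≤ |S|/2. Then |S'| + td(G ∖ S') ≤ |S| + td(G ∖ S). -/
open SimpleGraph

attribute [local instance] Classical.propDecidable

noncomputable section

/-- A rooted forest on a vertex type `V`, given by a parent map together with a
depth function (the depth of a root is `1`, and the depth of a child is the depth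
of its parent plus one).  The existence of such a depth function guarantees that
the parent map is acyclic, i.e. that the structure really is a rooted forest. -/
structure RootedForest (V : Type) where
  parent : V → Option V
  depth : V → ℕ
  depth_root : ∀ v, parent v = none → depth v = 1
  depth_parent : ∀ v u, parent v = some u → depth v = depth u + 1

namespace RootedForest

variable {V : Type}

/-- `T.Ancestor u v` means that `u` is a (reflexive) ancestor of `v` in `T`. -/
def Ancestor (T : RootedForest V) (u v : V) : Prop :=
  Relation.ReflTransGen (fun a b => T.parent a = some b) v u

/-- The height of a rooted forest: the maximum number of vertices on a
root-to-leaf path of one of its trees (0 for the empty forest). -/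
def height (T : RootedForest V) [Fintype V] : ℕ :=
  Finset.univ.sup T.depth

/-- The number of children of a vertex. -/
def childCount (T : RootedForest V) [Fintype V] (u : V) : ℕ :=
  (Finset.univ.filter (fun v => T.parent v = some u)).card

/-- The set of vertices of depth at most `d` in `T`. -/
def top (T : RootedForest V) (d : ℕ) : Set V := {v | T.depth v ≤ d}

/-- `T` is a rooted tree if it has exactly one root. -/
def IsTree (T : RootedForest V) : Prop := ∃! r, T.parent r = none

/-- The top separator of a rooted tree `T`: if no vertex of `T` has more than one
child (i.e. `T` is a path), it is all of `V(T)`; otherwise it is the set of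
vertices of depth at most the depth of the minimum-depth vertex having more than
one child. -/
def topSep (T : RootedForest V) [Fintype V] : Finset V :=
  if _ : ∃ p, 2 ≤ T.childCount p then
    Finset.univ.filter
      (fun v => T.depth v ≤ sInf {d | ∃ p, 2 ≤ T.childCount p ∧ T.depth p = d})
  else Finset.univ

end RootedForest

/-- `T` is a treedepth decomposition of `G`: a rooted forest on the vertex set of
`G` such that the endpoints of every edge of `G` are in ancestor-descendant
relation. -/
def IsTDDecomp {V : Type} (G : SimpleGraph V) (T : RootedForest V) : Prop :=
  ∀ u v, G.Adj u v → T.Ancestor u v ∨ T.Ancestor v u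

/-- The treedepth of a finite graph: the minimum height of a treedepth
decomposition of `G`. -/
def treedepth {V : Type} [Fintype V] (G : SimpleGraph V) : ℕ :=
  sInf {h | ∃ T : RootedForest V, IsTDDecomp G T ∧ T.height = h}

/-- `(T, f)` is a tree decomposition of `G`. -/
def IsTreeDecomp {V ι : Type} (G : SimpleGraph V) (T : SimpleGraph ι)
    (f : ι → Finset V) : Prop :=
  T.IsTree ∧
  (∀ v, ∃ i, v ∈ f i) ∧
  (∀ u v, G.Adj u v → ∃ i, u ∈ f i ∧ v ∈ f i) ∧
  (∀ v, (T.induce {i | v ∈ f i}).Connected)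

/-- The treewidth of a finite graph: the minimum over all tree decompositions of
(maximum bag size minus one), phrased as the least `w` such that `G` has a tree
decomposition all of whose bags have at most `w + 1` vertices. -/
def treewidth {V : Type} [Fintype V] (G : SimpleGraph V) : ℕ :=
  sInf {w | ∃ (ι : Type) (_ : Fintype ι) (T : SimpleGraph ι) (f : ι → Finset V),
    IsTreeDecomp G T f ∧ ∀ i, (f i).card ≤ w + 1}

/-- `S` is an `a`-`b` separator of `G`: `a, b ∉ S` and every walk from `a` to `b`
meets `S` (i.e. `a` and `b` lie in different connected components of `G ∖ S`). -/
def IsABSep {V : Type} (G : SimpleGraph V) (a b : V) (S : Finset V) : Prop :=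
  a ∉ S ∧ b ∉ S ∧ ∀ w : G.Walk a b, ∃ x ∈ w.support, x ∈ S

/-- `S` is a minimal separator of `G`: for some vertices `a, b`, it is an
`a`-`b` separator no proper subset of which is an `a`-`b` separator. -/
def IsMinSep {V : Type} (G : SimpleGraph V) (S : Finset V) : Prop :=
  ∃ a b, IsABSep G a b S ∧ ∀ S' ⊂ S, ¬ IsABSep G a b S'

/-- The grid graph `P_m × P_n`, with vertex set
`{(i,j) : 1 ≤ i ≤ n, 1 ≤ j ≤ m}` and edges between vertices at ℓ1-distance 1. -/
def gridGraph (n m : ℕ) : SimpleGraph (Fin n × Fin m) where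
  Adj a b := Nat.dist a.1.val b.1.val + Nat.dist a.2.val b.2.val = 1
  symm := by
    constructor
    intro a b h
    rwa [Nat.dist_comm b.1.val, Nat.dist_comm b.2.val]
  loopless := by constructor; intro a h; simp [Nat.dist_self] at h


/-- Vertices of the broom: grid vertices plus, for each row `i`, a path on `2^k - 1` vertices. -/
abbrev BroomV (n m k : ℕ) : Type := (Fin n × Fin m) ⊕ (Fin n × Fin (2 ^ k - 1))

/-- The broom `B_{n,m,k}`. -/
def broom (n m k : ℕ) : SimpleGraph (BroomV n m k) :=
  SimpleGraph.fromRel (fun x y =>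
    match x, y with
    | .inl a, .inl b => (gridGraph n m).Adj a b
    | .inl a, .inr b => a.1 = b.1 ∧ a.2.val = m - 1 ∧ b.2.val = 0
    | .inr a, .inr b => a.1 = b.1 ∧ a.2.val + 1 = b.2.val
    | .inr _, .inl _ => False)

/-- Vertices of the double broom: grid vertices plus, for each row `i`, a path
attached at `(i,1)` (first summand) and a path attached at `(i,m)` (second summand). -/
abbrev DBroomV (n m k : ℕ) : Type :=
  (Fin n × Fin m) ⊕ (Fin n × Fin (2 ^ k - 1)) ⊕ (Fin n × Fin (2 ^ k - 1))

/-- The double broom `D_{n,m,k}`. -/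
def dbroom (n m k : ℕ) : SimpleGraph (DBroomV n m k) :=
  SimpleGraph.fromRel (fun x y =>
    match x, y with
    | .inl a, .inl b => (gridGraph n m).Adj a b
    | .inl a, .inr (.inl b) => a.1 = b.1 ∧ a.2.val = 0 ∧ b.2.val = 0
    | .inl a, .inr (.inr b) => a.1 = b.1 ∧ a.2.val = m - 1 ∧ b.2.val = 0
    | .inr (.inl a), .inr (.inl b) => a.1 = b.1 ∧ a.2.val + 1 = b.2.val
    | .inr (.inr a), .inr (.inr b) => a.1 = b.1 ∧ a.2.val + 1 = b.2.val
    | _, _ => False)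

/-- Vertices of the graph `G_{n,m,k,l}`: grid vertices, plus a path on `2^k - 1`
vertices for every triple (row `i`, end `e ∈ {1,m}`, vertex `w ∈ W`), plus the
set `W` of `l` new vertices. -/
abbrev CornerV (n m k l : ℕ) : Type :=
  (Fin n × Fin m) ⊕ ((Fin n × Fin 2 × Fin l) × Fin (2 ^ k - 1)) ⊕ Fin l

/-- The graph `G_{n,m,k,l}`. -/
def corner (n m k l : ℕ) : SimpleGraph (CornerV n m k l) :=
  SimpleGraph.fromRel (fun x y =>
    match x, y with
    | .inl a, .inl b => (gridGraph n m).Adj a b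
    | .inl a, .inr (.inl (⟨i, e, _⟩, t)) =>
        a.1 = i ∧ t.val = 0 ∧
          ((e.val = 0 ∧ a.2.val = 0) ∨ (e.val = 1 ∧ a.2.val = m - 1))
    | .inr (.inl (p, t)), .inr (.inl (q, s)) => p = q ∧ t.val + 1 = s.val
    | .inr (.inl (⟨_, _, w⟩, t)), .inr (.inr w') => w = w' ∧ t.val = 2 ^ k - 2
    | _, _ => False)

/-- `H` is a minor of `G`: there are pairwise disjoint connected branch sets in
`G`, one for each vertex of `H`, such that adjacent vertices of `H` have
adjacent branch sets. -/
def IsMinor {W V : Type} (H : SimpleGraph W) (G : SimpleGraph V) : Prop :=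
  ∃ B : W → Set V,
    (∀ w, (G.induce (B w)).Connected) ∧
    (∀ w w', w ≠ w' → Disjoint (B w) (B w')) ∧
    (∀ w w', H.Adj w w' → ∃ u ∈ B w, ∃ v ∈ B w', G.Adj u v)

/-- A graph is chordal if it has no induced cycle of length four or more. -/
def IsChordal {V : Type} (G : SimpleGraph V) : Prop :=
  ∀ c : ℕ, 4 ≤ c → IsEmpty (SimpleGraph.cycleGraph c ↪g G)

/-- A graph is a cograph if it has no induced path on four vertices. -/
def IsCograph {V : Type} (G : SimpleGraph V) : Prop :=
  IsEmpty (SimpleGraph.pathGraph 4 ↪g G)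

/-- A graph is outerplanar iff it contains neither `K₄` nor `K_{2,3}` as a minor. -/
def IsOuterplanar {V : Type} (G : SimpleGraph V) : Prop :=
  ¬ IsMinor (⊤ : SimpleGraph (Fin 4)) G ∧
  ¬ IsMinor (completeBipartiteGraph (Fin 2) (Fin 3)) G

/-- The graph obtained from `G'` and the path on `p` vertices by adding a single
edge between `u ∈ V(G')` and a path vertex `v`. -/
def attachPath {V' : Type} (G' : SimpleGraph V') (p : ℕ) (u : V') (v : Fin p) :
    SimpleGraph (V' ⊕ Fin p) :=
  SimpleGraph.fromRel (fun x y =>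
    match x, y with
    | .inl a, .inl b => G'.Adj a b
    | .inr a, .inr b => a.val + 1 = b.val
    | .inl a, .inr b => a = u ∧ b = v
    | .inr _, .inl _ => False)

/-!
Treedepth decompositions are the same as tree orders: partial orders in which the elements
below any given one form a chain, the height being the largest such chain. Take an optimal tree
order of `G ∖ S`. Inside each component `C` of `G ∖ S'`, put the at most `|S| / 2` vertices of
`S ∩ C` as a chain on top of the restriction of that order to `C ∖ S`; edges of `G ∖ S'` stay
inside components, so this is a decomposition of `G ∖ S'` of height at most
`|S| / 2 + td(G ∖ S)`. Finally `|S'| ≤ tw(G) + 1 ≤ |S| - |S| / 2`.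
-/

open Finset

structure IsTreeOrder {W : Type} (R : W → W → Prop) : Prop where
  refl : ∀ a, R a a
  antisymm : ∀ {a b}, R a b → R b a → a = b
  trans : ∀ {a b c}, R a b → R b c → R a c
  total_of_le : ∀ {a b c}, R a c → R b c → R a b ∨ R b a

namespace IsTreeOrder

variable {W : Type} {R : W → W → Prop}

theorem of_linearOrder [LinearOrder W] : IsTreeOrder (· ≤ · : W → W → Prop) where
  refl := le_refl
  antisymm := le_antisymm
  trans := le_trans
  total_of_le {a b _} _ _ := le_total a b

theorem comap {X : Type} {R : X → X → Prop} (hR : IsTreeOrder R) {f : W → X}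
    (hf : Function.Injective f) : IsTreeOrder (fun a b => R (f a) (f b)) where
  refl a := hR.refl (f a)
  antisymm hab hba := hf (hR.antisymm hab hba)
  trans := hR.trans
  total_of_le := hR.total_of_le

theorem inf_equivalence (hR : IsTreeOrder R) {E : W → W → Prop} (hE : Equivalence E) :
    IsTreeOrder (fun a b => R a b ∧ E a b) where
  refl a := ⟨hR.refl a, hE.refl a⟩
  antisymm hab hba := hR.antisymm hab.1 hba.1
  trans hab hbc := ⟨hR.trans hab.1 hbc.1, hE.trans hab.2 hbc.2⟩
  total_of_le hac hbc := by
    have hab : E _ _ := hE.trans hac.2 (hE.symm hbc.2)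
    exact (hR.total_of_le hac.1 hbc.1).imp (⟨·, hab⟩) (⟨·, hE.symm hab⟩)

def IsParentOf (R : W → W → Prop) (p v : W) : Prop :=
  R p v ∧ p ≠ v ∧ ∀ u, R u v → u ≠ v → R u p

variable [Fintype W] (hR : IsTreeOrder R)
include hR

theorem exists_isParentOf {v : W} (h : ∃ u, R u v ∧ u ≠ v) : ∃ p, IsParentOf R p v := by
  obtain ⟨p, hp, hmax⟩ := exists_max_image {u | R u v ∧ u ≠ v} (fun u => #{w | R w u})
    (by obtain ⟨u, hu⟩ := h; exact ⟨u, by simpa using hu⟩)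
  simp only [mem_filter, mem_univ, true_and] at hp hmax
  refine ⟨p, hp.1, hp.2, fun u huv hu => ?_⟩
  rcases hR.total_of_le huv hp.1 with hup | hpu
  · exact hup
  by_contra hup
  have hlt : #{w | R w p} < #{w | R w u} := by
    refine card_lt_card ⟨fun w hw => ?_, fun hsub => ?_⟩
    · simp only [mem_filter, mem_univ, true_and] at hw ⊢
      exact hR.trans hw hpu
    · have : R u p := by simpa using hsub (by simpa using hR.refl u)
      exact hup this
  exact (hmax u ⟨huv, hu⟩).not_gt hlt

theorem card_eq_one_of_not_isParentOf {v : W} (h : ¬∃ p, IsParentOf R p v) :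
    #{u | R u v} = 1 := by
  rw [card_eq_one]
  refine ⟨v, eq_singleton_iff_unique_mem.2 ⟨by simpa using hR.refl v, fun u hu => ?_⟩⟩
  by_contra huv
  exact h (hR.exists_isParentOf ⟨u, by simpa using hu, huv⟩)

theorem card_eq_of_isParentOf {p v : W} (h : IsParentOf R p v) :
    #{u | R u v} = #{u | R u p} + 1 := by
  have hinsert : univ.filter (R · v) = insert v (univ.filter (R · p)) := by
    ext u
    simp only [mem_filter, mem_univ, true_and, mem_insert]
    refine ⟨fun huv => ?_, ?_⟩
    · by_cases hu : u = v
      · exact .inl hu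
      · exact .inr (h.2.2 u huv hu)
    · rintro (rfl | hup)
      exacts [hR.refl u, hR.trans hup h.1]
  rw [hinsert, card_insert_of_notMem]
  simpa using fun hvp => h.2.1 (hR.antisymm h.1 hvp)

end IsTreeOrder

namespace RootedForest

variable {W : Type}

theorem Ancestor.eq_or_depth_lt {T : RootedForest W} {u v : W} (h : T.Ancestor u v) :
    u = v ∨ T.depth u < T.depth v := by
  induction h with
  | refl => exact .inl rfl
  | tail _ hstep ih =>
    have := T.depth_parent _ _ hstep
    rcases ih with rfl | ih <;> omega

theorem isTreeOrder_ancestor (T : RootedForest W) : IsTreeOrder T.Ancestor where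
  refl _ := .refl
  antisymm huv hvu := by
    rcases huv.eq_or_depth_lt with h | h
    · exact h
    · rcases hvu.eq_or_depth_lt with h' | h'
      exacts [h'.symm, absurd h (by omega)]
  trans huv hvw := hvw.trans huv
  total_of_le hac hbc :=
    (Relation.ReflTransGen.total_of_right_unique
      (fun _ _ _ hb hc => Option.some.inj (hb.symm.trans hc)) hac hbc).symm

theorem card_ancestor_le_depth [Fintype W] (T : RootedForest W) (v : W) :
    #{u | T.Ancestor u v} ≤ T.depth v := by
  induction hn : T.depth v using Nat.strong_induction_on generalizing v with
  | _ n ih =>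
  cases hp : T.parent v with
  | none =>
    have hsub : univ.filter (T.Ancestor · v) ⊆ {v} := by
      intro u hu
      simp only [mem_filter, mem_univ, true_and, mem_singleton] at hu ⊢
      rcases Relation.ReflTransGen.cases_head hu with h | ⟨c, hc, -⟩
      exacts [h.symm, absurd (hp.symm.trans hc) (by simp)]
    have := card_le_card hsub
    have := T.depth_root v hp
    simp only [card_singleton] at *
    omega
  | some p =>
    have hsub : univ.filter (T.Ancestor · v) ⊆ insert v (univ.filter (T.Ancestor · p)) := by
      intro u hu
      simp only [mem_filter, mem_univ, true_and, mem_insert] at hu ⊢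
      rcases Relation.ReflTransGen.cases_head hu with h | ⟨c, hc, hcu⟩
      · exact .inl h.symm
      · exact .inr (Option.some.inj (hc.symm.trans hp) ▸ hcu)
    have hdepth := T.depth_parent v p hp
    have := ih (T.depth p) (by omega) p rfl
    have := (card_le_card hsub).trans (card_insert_le _ _)
    omega

variable [Fintype W] {R : W → W → Prop}

def ofTreeOrder (hR : IsTreeOrder R) : RootedForest W where
  parent v := if h : ∃ p, IsTreeOrder.IsParentOf R p v then some h.choose else none
  depth v := #{u | R u v}
  depth_root v hv := hR.card_eq_one_of_not_isParentOf (by simpa using hv)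
  depth_parent v p hvp := by
    split_ifs at hvp with h
    cases hvp
    exact hR.card_eq_of_isParentOf h.choose_spec

theorem ancestor_ofTreeOrder (hR : IsTreeOrder R) {u v : W} (huv : R u v) :
    (ofTreeOrder hR).Ancestor u v := by
  induction hn : #{w | R w v} using Nat.strong_induction_on generalizing v with
  | _ n ih =>
  by_cases hu : u = v
  · exact hu ▸ .refl
  have hp : ∃ p, IsTreeOrder.IsParentOf R p v := hR.exists_isParentOf ⟨u, huv, hu⟩
  have hparent : (ofTreeOrder hR).parent v = some hp.choose := dif_pos hp
  have hcard := hR.card_eq_of_isParentOf hp.choose_spec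
  exact .head hparent (ih _ (by omega) (hp.choose_spec.2.2 u huv hu) rfl)

end RootedForest

theorem treedepth_le_height {W : Type} [Fintype W] {G : SimpleGraph W} {T : RootedForest W}
    (hT : IsTDDecomp G T) : treedepth G ≤ T.height :=
  Nat.sInf_le ⟨T, hT, rfl⟩

open RootedForest in
theorem treedepth_le_iff {W : Type} [Fintype W] (G : SimpleGraph W) (k : ℕ) :
    treedepth G ≤ k ↔ ∃ R : W → W → Prop, IsTreeOrder R ∧
      (∀ u v, G.Adj u v → R u v ∨ R v u) ∧ ∀ v, #{u | R u v} ≤ k := by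
  constructor
  · intro hk
    let _ : LinearOrder W := LinearOrder.lift' _ (Fintype.equivFin W).injective
    have hne : {h | ∃ T : RootedForest W, IsTDDecomp G T ∧ T.height = h}.Nonempty :=
      ⟨_, ofTreeOrder IsTreeOrder.of_linearOrder, fun u v _ =>
        (le_total u v).imp (ancestor_ofTreeOrder _) (ancestor_ofTreeOrder _), rfl⟩
    obtain ⟨T, hT, hheight⟩ := Nat.sInf_mem hne
    refine ⟨T.Ancestor, T.isTreeOrder_ancestor, hT, fun v => ?_⟩
    calc #{u | T.Ancestor u v} ≤ T.depth v := T.card_ancestor_le_depth v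
      _ ≤ T.height := Finset.le_sup (mem_univ v)
      _ = treedepth G := hheight
      _ ≤ k := hk
  · rintro ⟨R, hR, hadj, hk⟩
    have hT : IsTDDecomp G (ofTreeOrder hR) := fun u v h =>
      (hadj u v h).imp (ancestor_ofTreeOrder hR) (ancestor_ofTreeOrder hR)
    exact (treedepth_le_height hT).trans (Finset.sup_le fun v _ => hk v)

section Stack

variable {W : Type} [LinearOrder W] (A : Set W)

def stackRel (P : ↥Aᶜ → ↥Aᶜ → Prop) (u v : W) : Prop :=
  (u ∈ A ∧ (v ∈ A → u ≤ v)) ∨ ∃ (hu : u ∉ A) (hv : v ∉ A), P ⟨u, hu⟩ ⟨v, hv⟩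

variable {A} {P : ↥Aᶜ → ↥Aᶜ → Prop}

theorem IsTreeOrder.stackRel (hP : IsTreeOrder P) : IsTreeOrder (stackRel A P) where
  refl a := by
    by_cases ha : a ∈ A
    exacts [.inl ⟨ha, fun _ => le_rfl⟩, .inr ⟨ha, ha, hP.refl _⟩]
  antisymm := by
    rintro a b (⟨ha, hab⟩ | ⟨ha, hb, hab⟩) (⟨hb', hba⟩ | ⟨hb', ha', hba⟩)
    · exact le_antisymm (hab hb') (hba ha)
    · exact absurd ha ha'
    · exact absurd hb' hb
    · exact congrArg Subtype.val (hP.antisymm hab hba)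
  trans := by
    rintro a b c (⟨ha, hab⟩ | ⟨ha, hb, hab⟩) (⟨hb', hbc⟩ | ⟨hb', hc, hbc⟩)
    · exact .inl ⟨ha, fun hc => (hab hb').trans (hbc hc)⟩
    · exact .inl ⟨ha, fun hc' => absurd hc' hc⟩
    · exact absurd hb' hb
    · exact .inr ⟨ha, hc, hP.trans hab hbc⟩
  total_of_le := by
    rintro a b c (⟨ha, -⟩ | ⟨ha, hc, hac⟩) (⟨hb, -⟩ | ⟨hb, hc', hbc⟩)
    · exact (le_total a b).imp (fun h => .inl ⟨ha, fun _ => h⟩) (fun h => .inl ⟨hb, fun _ => h⟩)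
    · exact .inl (.inl ⟨ha, fun hb' => absurd hb' hb⟩)
    · exact .inr (.inl ⟨hb, fun ha' => absurd ha' ha⟩)
    · exact (hP.total_of_le hac hbc).imp (fun h => .inr ⟨ha, hb, h⟩) (fun h => .inr ⟨hb, ha, h⟩)

theorem stackRel_or_stackRel {u v : W}
    (h : ∀ (hu : u ∉ A) (hv : v ∉ A), P ⟨u, hu⟩ ⟨v, hv⟩ ∨ P ⟨v, hv⟩ ⟨u, hu⟩) :
    stackRel A P u v ∨ stackRel A P v u := by
  by_cases hu : u ∈ A <;> by_cases hv : v ∈ A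
  · exact (le_total u v).imp (fun h => .inl ⟨hu, fun _ => h⟩) (fun h => .inl ⟨hv, fun _ => h⟩)
  · exact .inl (.inl ⟨hu, fun h => absurd h hv⟩)
  · exact .inr (.inl ⟨hv, fun h => absurd h hu⟩)
  · exact (h hu hv).imp (fun h => .inr ⟨hu, hv, h⟩) (fun h => .inr ⟨hv, hu, h⟩)

theorem card_stackRel_and_le [Fintype W] (E : W → W → Prop) (v : W) :
    #{u | stackRel A P u v ∧ E u v} ≤
      #{u | u ∈ A ∧ E u v} + #{u | ∃ (hu : u ∉ A) (hv : v ∉ A), P ⟨u, hu⟩ ⟨v, hv⟩} := by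
  refine (card_le_card fun u hu => ?_).trans (card_union_le _ _)
  simp only [mem_union, mem_filter, mem_univ, true_and] at hu ⊢
  unfold stackRel at hu
  rcases hu with ⟨⟨hu, -⟩ | hu, hr⟩
  exacts [.inl ⟨hu, hr⟩, .inr hu]

end Stack

theorem SimpleGraph.Reachable.exists_walk_of_induce {V : Type} {G : SimpleGraph V} {s : Set V}
    {u v : s} (h : (G.induce s).Reachable u v) :
    ∃ w : G.Walk u v, ∀ x ∈ w.support, x ∈ s := by
  obtain ⟨w⟩ := h
  refine ⟨w.map (Embedding.induce s).toHom, fun x hx => ?_⟩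
  obtain ⟨y, -, rfl⟩ := List.mem_map.1 (Walk.support_map _ _ ▸ hx)
  exact y.2

theorem treedepth_induce_compl_le {V : Type} [Fintype V] (G : SimpleGraph V) (S S' : Finset V)
    (k : ℕ) (hk : ∀ v : V, v ∉ S' → (Finset.univ.filter (fun u : V => u ∈ S ∧ u ∉ S' ∧
        ∃ w : G.Walk v u, ∀ x ∈ w.support, x ∉ S')).card ≤ k) :
    treedepth (G.induce {v : V | v ∉ S'}) ≤ k + treedepth (G.induce {v : V | v ∉ S}) := by
  obtain ⟨P, hP, hPadj, hPcard⟩ := (treedepth_le_iff (G.induce {v : V | v ∉ S}) _).1 le_rfl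
  set X := {v : V | v ∉ S'}
  let _ : LinearOrder X := LinearOrder.lift' _ (Fintype.equivFin X).injective
  let A : Set X := {x | (x : V) ∈ S}
  let ι : ↥Aᶜ → {v : V | v ∉ S} := fun a => ⟨a.1, a.2⟩
  have hι : Function.Injective ι := fun a b h => Subtype.ext (Subtype.ext congr($h.1))
  let P' : ↥Aᶜ → ↥Aᶜ → Prop := fun a b => P (ι a) (ι b)
  refine (treedepth_le_iff _ _).2 ⟨fun u v => stackRel A P' u v ∧ (G.induce X).Reachable u v,
    (hP.comap hι).stackRel.inf_equivalence
    (reachable_is_equivalence _), fun u v huv => ?_, fun v => ?_⟩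
  · exact .imp (⟨·, huv.reachable⟩) (⟨·, huv.symm.reachable⟩)
      (stackRel_or_stackRel fun hu hv => hPadj ⟨u, hu⟩ ⟨v, hv⟩ huv)
  -- `congr!` only reconciles the `Decidable` instances of the two filters.
  refine (le_of_eq (by congr!)).trans ((card_stackRel_and_le (P := P') (G.induce X).Reachable v).trans
    (add_le_add ?_ ?_))
  · refine (card_le_card_of_injOn Subtype.val (fun u hu => ?_) Subtype.val_injective.injOn).trans
      (hk v v.2)
    simp only [coe_filter, mem_univ, true_and, Set.mem_ofPred_eq] at hu ⊢
    exact ⟨hu.1, u.2, hu.2.symm.exists_walk_of_induce⟩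
  · by_cases hv : v ∈ A
    · simp [hv]
    refine (card_le_card_of_injOn Subtype.val (fun u hu => ?_) Subtype.val_injective.injOn
      (t := (univ.filter (P · (ι ⟨v, hv⟩))).map (Function.Embedding.subtype _))).trans
      ((card_map _).trans_le (hPcard _))
    simp only [coe_filter, mem_univ, true_and, Set.mem_ofPred_eq] at hu
    obtain ⟨hu, _, hPuv⟩ := hu
    exact mem_map.2 ⟨ι ⟨u, hu⟩, by simpa using hPuv, rfl⟩

theorem statement6_general {V : Type} [Fintype V] (G : SimpleGraph V)
    (S S' : Finset V)
    (hScard : 2 * treewidth G + 1 ≤ S.card)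
    (hS'card : S'.card ≤ treewidth G + 1)
    -- every connected component of `G ∖ S'` contains at most `|S| / 2` vertices of `S`
    -- (the component of a vertex `v ∉ S'` consists of the vertices joined to `v`
    -- by a walk avoiding `S'`):
    (hbal : ∀ v : V, v ∉ S' →
        2 * (Finset.univ.filter (fun u : V => u ∈ S ∧ u ∉ S' ∧
              ∃ w : G.Walk v u, ∀ x ∈ w.support, x ∉ S')).card ≤ S.card) :
    S'.card + treedepth (G.induce {v : V | v ∉ S'}) ≤
      S.card + treedepth (G.induce {v : V | v ∉ S}) := by
  have h := treedepth_induce_compl_le G S S' (S.card / 2) fun v hv => by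
    have := hbal v hv
    omega
  omega

/-- Let `G` be non-complete, `S` a minimal separator with
`|S| ≥ 2·tw(G) + 1`, and `S'` a vertex set with `|S'| ≤ tw(G) + 1` such that
`G[S ∖ S']` has more than one connected component and every connected component
`C'` of `G ∖ S'` satisfies `|V(C') ∩ S| ≤ |S| / 2`.  Then
`|S'| + td(G ∖ S') ≤ |S| + td(G ∖ S)`. -/
theorem statement6 {V : Type} [Fintype V] (G : SimpleGraph V) (hG : G ≠ ⊤)
    (S S' : Finset V) (hS : IsMinSep G S)
    (hScard : 2 * treewidth G + 1 ≤ S.card)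
    (hS'card : S'.card ≤ treewidth G + 1)
    -- `G[S ∖ S']` has more than one connected component:
    (hsplit : ∃ a b : {v : V // v ∈ S ∧ v ∉ S'},
        ¬ (G.induce {v : V | v ∈ S ∧ v ∉ S'}).Reachable a b)
    -- every connected component of `G ∖ S'` contains at most `|S| / 2` vertices of `S`
    -- (the component of a vertex `v ∉ S'` consists of the vertices joined to `v`
    -- by a walk avoiding `S'`):
    (hbal : ∀ v : V, v ∉ S' →
        2 * (Finset.univ.filter (fun u : V => u ∈ S ∧ u ∉ S' ∧
              ∃ w : G.Walk v u, ∀ x ∈ w.support, x ∉ S')).card ≤ S.card) :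
    S'.card + treedepth (G.induce {v : V | v ∉ S'}) ≤
      S.card + treedepth (G.induce {v : V | v ∉ S}) :=
  statement6_general G S S' hScard hS'card hbal
end
end

section
/- Let n ≥ 1 and k ≥ 1 be integers, let G be the grid graph with vertex set {(i,j) : 1 ≤ i ≤ n, 1 ≤ j ≤ 2^k − 1} (edges between vertices at ℓ1-distance 1), let T be a treedepth decomposition of G, and let d ≥ 1 be an integer such that for every 1 ≤ j ≤ 2^k − 1 there exists some 1 ≤ i ≤ n with (i,j) ∈ top(T,d). Then d ≥ k. -/
open SimpleGraph

attribute [local instance] Classical.propDecidable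

noncomputable section

/-! Every strip of consecutive columns of the grid is connected, so its shallowest vertex is an
ancestor of the whole strip. A strip of width `2^(k+1) - 1` is two strips of width `2^k - 1`
around a middle column; the root of the half avoiding the column of the big root lies strictly
below it. Halving `k - 1` times yields a chain of `k` roots of strictly increasing depth, the last
of which is an ancestor of a whole column, hence of a vertex of depth at most `d`. -/

namespace RootedForest

variable {V : Type} {T : RootedForest V}

theorem one_le_depth (T : RootedForest V) (v : V) : 1 ≤ T.depth v := by
  cases h : T.parent v with
  | none => rw [T.depth_root v h]
  | some u => rw [T.depth_parent v u h]; omega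

theorem Ancestor.depth_le {u v : V} (h : T.Ancestor u v) : T.depth u ≤ T.depth v := by
  induction h with
  | refl => exact le_rfl
  | tail _ hstep ih => have := T.depth_parent _ _ hstep; omega

theorem Ancestor.depth_lt {u v : V} (h : T.Ancestor u v) (hne : u ≠ v) :
    T.depth u < T.depth v := by
  rcases Relation.ReflTransGen.cases_tail h with rfl | ⟨b, hb, hstep⟩
  · exact absurd rfl hne
  · have := T.depth_parent b u hstep
    have := RootedForest.Ancestor.depth_le (T := T) hb
    omega

theorem ancestor_total_of_ancestor {a b x : V} (ha : T.Ancestor a x) (hb : T.Ancestor b x) :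
    T.Ancestor a b ∨ T.Ancestor b a := by
  induction ha using Relation.ReflTransGen.head_induction_on with
  | refl => exact Or.inr hb
  | head hstep _ ih =>
    rcases Relation.ReflTransGen.cases_head hb with rfl | ⟨c, hstep', hrest⟩
    · exact Or.inl (Relation.ReflTransGen.head hstep ‹_›)
    · rw [hstep, Option.some.injEq] at hstep'
      subst hstep'
      exact ih hrest

end RootedForest

namespace IsTDDecomp

variable {V : Type} {G : SimpleGraph V} {T : RootedForest V}

/-- `u` and `v` are comparable, and if `u` lay above `v` it would be comparable with `r`, hence
below `r` by depth. -/
theorem ancestor_of_adj (hT : IsTDDecomp G T) {r u v : V} (hrv : T.Ancestor r v)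
    (hadj : G.Adj u v) (hdepth : T.depth r ≤ T.depth u) : T.Ancestor r u := by
  rcases hT u v hadj with huv | hvu
  · rcases RootedForest.ancestor_total_of_ancestor huv hrv with hur | hru
    · by_cases h : u = r
      · exact h ▸ Relation.ReflTransGen.refl
      · exact absurd (hur.depth_lt h) (by omega)
    · exact hru
  · exact hvu.trans hrv

/-- Take `w` with `φ w` of minimum depth: by `ancestor_of_adj`, the descendants of `φ w` are
closed under following edges of the image. -/
theorem exists_ancestor_of_hom {W : Type} [Finite W] [Nonempty W] {H : SimpleGraph W}
    (hT : IsTDDecomp G T) (hH : H.Preconnected) (φ : H →g G) :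
    ∃ w, ∀ w', T.Ancestor (φ w) (φ w') := by
  obtain ⟨w, hmin⟩ := Finite.exists_min (fun w => T.depth (φ w))
  refine ⟨w, fun w' => ?_⟩
  obtain ⟨p⟩ := hH w' w
  induction p with
  | nil => exact Relation.ReflTransGen.refl
  | cons hadj _ ih => exact hT.ancestor_of_adj (ih hmin) (φ.map_adj hadj) (hmin _)

end IsTDDecomp

def gridStripHom (n m c L : ℕ) (hcL : c + L ≤ m) :
    (pathGraph n).boxProd (pathGraph L) →g gridGraph n m where
  toFun v := (v.1, ⟨c + v.2, by omega⟩)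
  map_rel' {v w} h := by
    rw [boxProd_adj, pathGraph_adj, pathGraph_adj] at h
    show Nat.dist _ _ + Nat.dist _ _ = 1
    simp only [Nat.dist]
    rcases h with ⟨h, h'⟩ | ⟨h, h'⟩ <;> simp only [h'] <;> omega

theorem IsTDDecomp.exists_strip_root {n m : ℕ} {T : RootedForest (Fin n × Fin m)}
    (hT : IsTDDecomp (gridGraph n m) T) (hn : 0 < n) {c L : ℕ} (hL : 0 < L) (hcL : c + L ≤ m) :
    ∃ r : Fin n × Fin m, (c ≤ r.2 ∧ r.2 < c + L) ∧
      ∀ v : Fin n × Fin m, c ≤ v.2 → v.2 < c + L → T.Ancestor r v := by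
  have : Nonempty (Fin n × Fin L) := ⟨(⟨0, hn⟩, ⟨0, hL⟩)⟩
  obtain ⟨w, hw⟩ := hT.exists_ancestor_of_hom
    ((pathGraph_preconnected n).boxProd (pathGraph_preconnected L)) (gridStripHom n m c L hcL)
  refine ⟨gridStripHom n m c L hcL w, ⟨by simp [gridStripHom], by simp [gridStripHom]⟩,
    fun v hc hcv => ?_⟩
  convert hw (v.1, ⟨v.2 - c, by omega⟩)
  ext <;> simp [gridStripHom]
  omega

theorem IsTDDecomp.depth_add_le_of_strip {n m d : ℕ} {T : RootedForest (Fin n × Fin m)}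
    (hT : IsTDDecomp (gridGraph n m) T) (hn : 0 < n)
    (hcover : ∀ j : Fin m, ∃ i : Fin n, (i, j) ∈ T.top d) (k : ℕ) :
    ∀ c, c + (2 ^ (k + 1) - 1) ≤ m → ∀ r : Fin n × Fin m,
      (∀ v : Fin n × Fin m, c ≤ v.2 → v.2 < c + (2 ^ (k + 1) - 1) → T.Ancestor r v) →
      T.depth r + k ≤ d := by
  induction k with
  | zero =>
    intro c hc r hr
    obtain ⟨i, hi⟩ := hcover ⟨c, by omega⟩
    have := (hr (i, ⟨c, by omega⟩) le_rfl (by simp)).depth_le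
    exact le_trans (by omega) hi
  | succ k ih =>
    intro c hc r hr
    have hpow : 2 ^ (k + 2) = 2 * 2 ^ (k + 1) := by ring
    have hpos : 0 < 2 ^ (k + 1) - 1 := by have := Nat.one_lt_two_pow (Nat.succ_ne_zero k); omega
    obtain ⟨c', hc'c, hc'w, hr'⟩ :
        ∃ c', c ≤ c' ∧ c' + (2 ^ (k + 1) - 1) ≤ c + (2 ^ (k + 2) - 1) ∧
        (r.2 < c' ∨ c' + (2 ^ (k + 1) - 1) ≤ r.2) := by
      by_cases h : c + (2 ^ (k + 1) - 1) ≤ r.2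
      · exact ⟨c, le_rfl, by omega, Or.inr h⟩
      · exact ⟨c + 2 ^ (k + 1), by omega, by omega, Or.inl (by omega)⟩
    obtain ⟨r', hr'mem, hr'anc⟩ := hT.exists_strip_root hn hpos (by omega : c' + _ ≤ m)
    have hlt : T.depth r < T.depth r' :=
      (hr r' (by omega) (by omega)).depth_lt (by rintro rfl; omega)
    have := ih c' (by omega) r' hr'anc
    omega

theorem statement7_general (n k : ℕ)
    (T : RootedForest (Fin n × Fin (2 ^ k - 1)))
    (hT : IsTDDecomp (gridGraph n (2 ^ k - 1)) T)
    (d : ℕ)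
    (hcover : ∀ j : Fin (2 ^ k - 1), ∃ i : Fin n, (i, j) ∈ T.top d) :
    k ≤ d := by
  obtain _ | k := k
  · exact Nat.zero_le d
  have hm : 0 < 2 ^ (k + 1) - 1 := by have := Nat.one_lt_two_pow (Nat.succ_ne_zero k); omega
  obtain ⟨i, -⟩ := hcover ⟨0, hm⟩
  have hn : 0 < n := i.pos
  obtain ⟨r, -, hr⟩ := hT.exists_strip_root hn hm (c := 0) (by omega)
  have := hT.depth_add_le_of_strip hn hcover k 0 (by omega) r
    (fun v _ hv => hr v (Nat.zero_le _) hv)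
  have := T.one_le_depth r
  omega

/-- For the grid `P_{2^k - 1} × P_n` (with `n, k ≥ 1`), if `T` is a
treedepth decomposition of the grid and `d ≥ 1` is such that every column `j`
contains a vertex of `top(T, d)`, then `d ≥ k`. -/
theorem statement7 (n k : ℕ) (hn : 1 ≤ n) (hk : 1 ≤ k)
    (T : RootedForest (Fin n × Fin (2 ^ k - 1)))
    (hT : IsTDDecomp (gridGraph n (2 ^ k - 1)) T)
    (d : ℕ) (hd : 1 ≤ d)
    (hcover : ∀ j : Fin (2 ^ k - 1), ∃ i : Fin n, (i, j) ∈ T.top d) :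
    k ≤ d :=
  statement7_general n k T hT d hcover

end
end

section
/- Let G be a finite simple graph that has a minimal separator S with |S| ≥ 3. Then G contains the complete bipartite graph K_{2,3} as a minor. -/
open SimpleGraph

attribute [local instance] Classical.propDecidable

noncomputable section

/-! The two sides `a` and `b` of a minimal `a`-`b` separator `S` give two disjoint connected
branch sets: the vertices reachable from `a`, resp. `b`, in `G ∖ S`. By minimality every `s ∈ S`
has a neighbour in both, so any three vertices of `S`, as singleton branch sets, complete a
`K_{2,3}` minor. -/

namespace SimpleGraph

variable {V : Type} {G : SimpleGraph V} {S : Set V} {a x y : V}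

def reachAvoiding (G : SimpleGraph V) (S : Set V) (a : V) : Set V :=
  {x | ∃ w : G.Walk a x, ∀ y ∈ w.support, y ∉ S}

lemma mem_reachAvoiding_self (ha : a ∉ S) : a ∈ G.reachAvoiding S a :=
  ⟨.nil, by simpa using ha⟩

lemma notMem_of_mem_reachAvoiding (hx : x ∈ G.reachAvoiding S a) : x ∉ S := by
  obtain ⟨w, hw⟩ := hx
  exact hw x w.end_mem_support

lemma mem_reachAvoiding_of_adj (hx : x ∈ G.reachAvoiding S a) (hxy : G.Adj x y) (hy : y ∉ S) :
    y ∈ G.reachAvoiding S a := by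
  obtain ⟨w, hw⟩ := hx
  refine ⟨w.concat hxy, fun z hz => ?_⟩
  rw [Walk.support_concat, List.mem_append, List.mem_singleton] at hz
  rcases hz with hz | rfl
  · exact hw z hz
  · exact hy

lemma mem_reachAvoiding_of_mem_support (w : G.Walk a x) (hw : ∀ z ∈ w.support, z ∉ S)
    (hy : y ∈ w.support) : y ∈ G.reachAvoiding S a :=
  ⟨w.takeUntil y hy, fun z hz => hw z (w.support_takeUntil_subset_support hy hz)⟩

lemma mem_reachAvoiding_symm (hx : x ∈ G.reachAvoiding S a) : a ∈ G.reachAvoiding S x := by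
  obtain ⟨w, hw⟩ := hx
  exact ⟨w.reverse, fun z hz => hw z (by simpa using hz)⟩

lemma mem_reachAvoiding_trans (hx : x ∈ G.reachAvoiding S a) (hy : y ∈ G.reachAvoiding S x) :
    y ∈ G.reachAvoiding S a := by
  obtain ⟨w, hw⟩ := hx
  obtain ⟨w', hw'⟩ := hy
  refine ⟨w.append w', fun z hz => ?_⟩
  rcases (w.mem_support_append_iff w').mp hz with hz | hz
  · exact hw z hz
  · exact hw' z hz

lemma connected_induce_reachAvoiding (ha : a ∉ S) :
    (G.induce (G.reachAvoiding S a)).Connected := by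
  refine G.induce_connected_of_patches a (mem_reachAvoiding_self ha) fun {x} ⟨w, hw⟩ => ?_
  refine ⟨{z | z ∈ w.support}, fun z hz => mem_reachAvoiding_of_mem_support w hw hz,
    w.start_mem_support, w.end_mem_support, ?_⟩
  exact w.connected_induce_support.preconnected _ _

end SimpleGraph

open SimpleGraph

section Separators

variable {V : Type} {G : SimpleGraph V} {S : Finset V} {a b s : V}

lemma IsABSep.symm (h : IsABSep G a b S) : IsABSep G b a S := by
  obtain ⟨ha, hb, hsep⟩ := h
  refine ⟨hb, ha, fun w => ?_⟩
  obtain ⟨x, hx, hxS⟩ := hsep w.reverse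
  exact ⟨x, by simpa using hx, hxS⟩

lemma IsABSep.notMem_reachAvoiding (h : IsABSep G a b S) : b ∉ G.reachAvoiding S a := by
  rintro ⟨w, hw⟩
  obtain ⟨x, hx, hxS⟩ := h.2.2 w
  exact hw x hx hxS

lemma IsABSep.disjoint_reachAvoiding (h : IsABSep G a b S) :
    Disjoint (G.reachAvoiding S a) (G.reachAvoiding S b) :=
  Set.disjoint_left.mpr fun _ hxa hxb =>
    h.notMem_reachAvoiding (mem_reachAvoiding_trans hxa (mem_reachAvoiding_symm hxb))

lemma IsABSep.exists_adj_of_not_isABSep_erase (h : IsABSep G a b S)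
    (hmin : ¬ IsABSep G a b (S.erase s)) :
    ∃ u ∈ G.reachAvoiding S a, G.Adj u s := by
  have ⟨ha, hb, _⟩ := h
  obtain ⟨w, hw⟩ : ∃ w : G.Walk a b, ∀ x ∈ w.support, x ∉ S.erase s := by
    by_contra! hall
    exact hmin ⟨fun h' => ha (Finset.mem_of_mem_erase h'),
      fun h' => hb (Finset.mem_of_mem_erase h'), hall⟩
  -- the step on which `w` leaves the `a`-side of `G ∖ S` must enter `S`, and hence at `s`
  obtain ⟨d, hd, hfst, hsnd⟩ :=
    w.exists_boundary_dart _ (mem_reachAvoiding_self ha) h.notMem_reachAvoiding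
  have hsndS : d.snd ∈ S := by
    by_contra hS
    exact hsnd (mem_reachAvoiding_of_adj hfst d.adj hS)
  have hsnd_eq : d.snd = s := by
    by_contra hne
    exact hw _ (w.dart_snd_mem_support_of_mem_darts hd) (Finset.mem_erase.mpr ⟨hne, hsndS⟩)
  exact ⟨d.fst, hfst, hsnd_eq ▸ d.adj⟩

end Separators

lemma isMinor_completeBipartiteGraph {V κ ι : Type} {G : SimpleGraph V} (A : κ → Set V)
    (hA : ∀ k, (G.induce (A k)).Connected) (hAdisj : Pairwise fun k k' => Disjoint (A k) (A k'))
    (f : ι → V) (hf : Function.Injective f) (hfA : ∀ k i, f i ∉ A k)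
    (hadj : ∀ k i, ∃ u ∈ A k, G.Adj u (f i)) :
    IsMinor (completeBipartiteGraph κ ι) G := by
  refine ⟨Sum.elim A fun i => {f i}, ?_, ?_, ?_⟩
  · rintro (k | i)
    · exact hA k
    · simp only [Sum.elim_inr, induce_singleton_eq_top]
      exact connected_top
  · rintro (k | i) (k' | i') hne
    · exact hAdisj fun h => hne (congrArg Sum.inl h)
    · exact Set.disjoint_singleton_right.mpr (hfA k i')
    · exact Set.disjoint_singleton_left.mpr (hfA k' i)
    · exact Set.disjoint_singleton.mpr (hf.ne fun h => hne (congrArg Sum.inr h))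
  · rintro (k | i) (k' | i') hkk'
    · simp [completeBipartiteGraph] at hkk'
    · obtain ⟨u, hu, hus⟩ := hadj k i'
      exact ⟨u, hu, f i', rfl, hus⟩
    · obtain ⟨u, hu, hus⟩ := hadj k' i
      exact ⟨f i, rfl, u, hu, hus.symm⟩
    · simp [completeBipartiteGraph] at hkk'

theorem statement16_general {V : Type} (G : SimpleGraph V)
    (S : Finset V) (hS : IsMinSep G S) (h3 : 3 ≤ S.card) :
    IsMinor (completeBipartiteGraph (Fin 2) (Fin 3)) G := by
  obtain ⟨a, b, hsep, hmin⟩ := hS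
  have hnotErase : ∀ s ∈ S, ¬ IsABSep G a b (S.erase s) := fun s hs =>
    hmin _ (Finset.erase_ssubset hs)
  let f : Fin 3 → V := fun i => S.equivFin.symm (Fin.castLE h3 i)
  have hfS : ∀ i, f i ∈ S := fun i => (S.equivFin.symm _).2
  refine isMinor_completeBipartiteGraph ![G.reachAvoiding S a, G.reachAvoiding S b] ?_ ?_ f
    (Subtype.val_injective.comp (S.equivFin.symm.injective.comp (Fin.castLE_injective h3)))
    ?_ ?_
  · intro k
    fin_cases k
    exacts [connected_induce_reachAvoiding hsep.1, connected_induce_reachAvoiding hsep.2.1]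
  · intro k k' hne
    fin_cases k <;> fin_cases k' <;> simp only [ne_eq, not_true_eq_false] at hne
    exacts [hsep.disjoint_reachAvoiding, hsep.disjoint_reachAvoiding.symm]
  · intro k i
    fin_cases k <;> exact fun h => notMem_of_mem_reachAvoiding h (hfS i)
  · intro k i
    fin_cases k
    · exact hsep.exists_adj_of_not_isABSep_erase (hnotErase _ (hfS i))
    · exact hsep.symm.exists_adj_of_not_isABSep_erase
        fun hsep' => hnotErase _ (hfS i) hsep'.symm

/-- If a finite simple graph `G` has a minimal separator of size at
least 3, then `G` contains `K_{2,3}` as a minor. -/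
theorem statement16 {V : Type} [Fintype V] (G : SimpleGraph V)
    (S : Finset V) (hS : IsMinSep G S) (h3 : 3 ≤ S.card) :
    IsMinor (completeBipartiteGraph (Fin 2) (Fin 3)) G :=
  statement16_general G S hS h3

end
end
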